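/- Let E and F be Banach spaces over 𝕜 (= ℝ or ℂ), let m, n, k ≥ 1 and P ∈ 𝒫(^mE;F). Then the norm of the generalized adjoint satisfies ‖Δ_k^n P‖ := sup_{q ∈ 𝒫(^kF), ‖q‖≤1} ‖(Δ_k^n P)(q)‖ = ‖P‖^{kn}. -/

import Mathlib

open scoped NNReal ENNReal

/-- `P : E → F` is a continuous `m`-homogeneous polynomial: it is generated by a
continuous `m`-linear map. -/
def IsHomPoly (𝕜 : Type*) [RCLike 𝕜] (m : ℕ) {E F : Type*}
    [NormedAddCommGroup E] [NormedSpace 𝕜 E] [NormedAddCommGroup F] [NormedSpace 𝕜 F]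
    (P : E → F) : Prop :=
  ∃ A : ContinuousMultilinearMap 𝕜 (fun _ : Fin m => E) F, ∀ x, P x = A (fun _ => x)

/-- The sup norm over the closed unit ball. -/
noncomputable def polyNorm {E F : Type*} [Norm E] [Norm F] (P : E → F) : ℝ :=
  sSup ((fun x => ‖P x‖) '' {x : E | ‖x‖ ≤ 1})

/-- The space `𝒫(^m E; F)` of continuous `m`-homogeneous polynomials. -/
structure HPoly (𝕜 : Type*) [RCLike 𝕜] (m : ℕ) (E F : Type*)
    [NormedAddCommGroup E] [NormedSpace 𝕜 E] [NormedAddCommGroup F] [NormedSpace 𝕜 F] where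
  toFun : E → F
  isPoly' : IsHomPoly 𝕜 m toFun

namespace HPoly

variable {𝕜 : Type*} [RCLike 𝕜] {m : ℕ} {E F : Type*}
  [NormedAddCommGroup E] [NormedSpace 𝕜 E] [NormedAddCommGroup F] [NormedSpace 𝕜 F]

instance : FunLike (HPoly 𝕜 m E F) E F where
  coe P := P.toFun
  coe_injective := by rintro ⟨f, hf⟩ ⟨g, hg⟩ h; simpa using h

@[ext] theorem ext {P Q : HPoly 𝕜 m E F} (h : ∀ x, P x = Q x) : P = Q := DFunLike.ext _ _ h

theorem isPoly (P : HPoly 𝕜 m E F) : IsHomPoly 𝕜 m ⇑P := P.isPoly'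

instance : Zero (HPoly 𝕜 m E F) := ⟨⟨fun _ => 0, ⟨0, by simp⟩⟩⟩

@[simp] theorem zero_apply (x : E) : (0 : HPoly 𝕜 m E F) x = 0 := rfl

instance : Add (HPoly 𝕜 m E F) :=
  ⟨fun P Q => ⟨fun x => P x + Q x, by
    obtain ⟨A, hA⟩ := P.isPoly'
    obtain ⟨B, hB⟩ := Q.isPoly'
    refine ⟨A + B, fun x => ?_⟩
    show P.toFun x + Q.toFun x = (A + B) fun _ => x
    rw [ContinuousMultilinearMap.add_apply, hA x, hB x]⟩⟩

@[simp] theorem add_apply (P Q : HPoly 𝕜 m E F) (x : E) : (P + Q) x = P x + Q x := rfl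

instance : Neg (HPoly 𝕜 m E F) :=
  ⟨fun P => ⟨fun x => -P x, by
    obtain ⟨A, hA⟩ := P.isPoly'
    refine ⟨-A, fun x => ?_⟩
    show -P.toFun x = (-A) fun _ => x
    rw [ContinuousMultilinearMap.neg_apply, hA x]⟩⟩

@[simp] theorem neg_apply (P : HPoly 𝕜 m E F) (x : E) : (-P) x = -P x := rfl

instance : SMul 𝕜 (HPoly 𝕜 m E F) :=
  ⟨fun c P => ⟨fun x => c • P x, by
    obtain ⟨A, hA⟩ := P.isPoly'
    refine ⟨c • A, fun x => ?_⟩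
    show c • P.toFun x = (c • A) fun _ => x
    rw [ContinuousMultilinearMap.smul_apply, hA x]⟩⟩

@[simp] theorem smul_apply (c : 𝕜) (P : HPoly 𝕜 m E F) (x : E) : (c • P) x = c • P x := rfl

instance : AddCommGroup (HPoly 𝕜 m E F) where
  add_assoc P Q R := by ext x; simp [add_assoc]
  zero_add P := by ext x; simp
  add_zero P := by ext x; simp
  add_comm P Q := by ext x; simp [add_comm]
  neg_add_cancel P := by ext x; simp
  nsmul := nsmulRec
  zsmul := zsmulRec

instance : Module 𝕜 (HPoly 𝕜 m E F) where
  one_smul P := by ext x; simp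
  mul_smul a b P := by ext x; simp [mul_smul]
  smul_zero a := by ext x; simp
  smul_add a P Q := by ext x; simp
  add_smul a b P := by ext x; simp [add_smul]
  zero_smul P := by ext x; simp

theorem bddAbove_image (P : HPoly 𝕜 m E F) :
    BddAbove ((fun x => ‖P x‖) '' {x : E | ‖x‖ ≤ 1}) := by
  obtain ⟨A, hA⟩ := P.isPoly'
  refine ⟨‖A‖, ?_⟩
  rintro r ⟨x, hx, rfl⟩
  show ‖P.toFun x‖ ≤ ‖A‖
  rw [hA x]
  calc ‖A fun _ => x‖ ≤ ‖A‖ * ∏ _i : Fin m, ‖x‖ := A.le_opNorm _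
    _ ≤ ‖A‖ * 1 := by
        refine mul_le_mul_of_nonneg_left ?_ (norm_nonneg A)
        rw [Finset.prod_const]
        exact pow_le_one₀ (norm_nonneg x) hx
    _ = ‖A‖ := mul_one _

theorem polyNorm_coe_nonneg (P : HPoly 𝕜 m E F) : 0 ≤ polyNorm ⇑P :=
  le_trans (norm_nonneg (P 0)) (le_csSup (bddAbove_image P) ⟨0, by simp, rfl⟩)

noncomputable instance : NormedAddCommGroup (HPoly 𝕜 m E F) :=
  AddGroupNorm.toNormedAddCommGroup
    { toFun := fun P => polyNorm (⇑P)
      map_zero' := by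
        simp only [polyNorm]
        have h : (fun x : E => ‖(0 : HPoly 𝕜 m E F) x‖) '' {x : E | ‖x‖ ≤ 1} = {0} := by
          apply Set.eq_singleton_iff_nonempty_unique_mem.2
          constructor
          · exact ⟨0, ⟨0, by simp, by simp⟩⟩
          · rintro r ⟨x, -, rfl⟩; simp
        rw [h, csSup_singleton]
      add_le' := fun P Q => by
        apply Real.sSup_le
        · rintro r ⟨x, hx, rfl⟩
          calc ‖(P + Q) x‖ ≤ ‖P x‖ + ‖Q x‖ := norm_add_le _ _
            _ ≤ polyNorm ⇑P + polyNorm ⇑Q :=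
                add_le_add (le_csSup (bddAbove_image P) ⟨x, hx, rfl⟩)
                  (le_csSup (bddAbove_image Q) ⟨x, hx, rfl⟩)
        · exact add_nonneg (polyNorm_coe_nonneg P) (polyNorm_coe_nonneg Q)
      neg' := fun P => by simp [polyNorm]
      eq_zero_of_map_eq_zero' := fun P h => by
        have h' : polyNorm ⇑P = 0 := h
        have hball : ∀ x : E, ‖x‖ ≤ 1 → P x = 0 := by
          intro x hx
          have h1 : ‖P x‖ ≤ polyNorm ⇑P := le_csSup (bddAbove_image P) ⟨x, hx, rfl⟩
          rw [h'] at h1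
          exact norm_le_zero_iff.1 h1
        ext x
        rcases eq_or_ne x 0 with rfl | hx
        · simpa using hball 0 (by simp)
        · obtain ⟨A, hA⟩ := P.isPoly'
          set c : 𝕜 := ((‖x‖ : ℝ) : 𝕜) with hcdef
          have hc : c ≠ 0 := by
            simp only [hcdef, ne_eq, RCLike.ofReal_eq_zero]
            exact norm_ne_zero_iff.2 hx
          have hu : ‖(c⁻¹ • x : E)‖ ≤ 1 := by
            rw [norm_smul, norm_inv, hcdef, RCLike.norm_ofReal,
              abs_of_nonneg (norm_nonneg x),
              inv_mul_cancel₀ (norm_ne_zero_iff.2 hx)]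
          have h0 : P (c⁻¹ • x) = 0 := hball _ hu
          have key : P x = c ^ m • P (c⁻¹ • x) := by
            show P.toFun x = c ^ m • P.toFun (c⁻¹ • x)
            rw [hA x, hA (c⁻¹ • x)]
            have h2 := A.map_smul_univ (fun _ : Fin m => c) (fun _ : Fin m => c⁻¹ • x)
            rw [Finset.prod_const] at h2
            have h3 : (fun _ : Fin m => c • c⁻¹ • x) = fun _ : Fin m => x := by
              funext i
              rw [smul_smul, mul_inv_cancel₀ hc, one_smul]
            rw [h3] at h2
            simpa using h2
          rw [key, h0, smul_zero]
          simp }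

theorem norm_def (P : HPoly 𝕜 m E F) : ‖P‖ = polyNorm ⇑P := rfl

noncomputable instance : NormedSpace 𝕜 (HPoly 𝕜 m E F) :=
  { (inferInstance : Module 𝕜 (HPoly 𝕜 m E F)) with
    norm_smul_le := fun c P => by
      show polyNorm ⇑(c • P) ≤ ‖c‖ * polyNorm ⇑P
      apply Real.sSup_le
      · rintro r ⟨x, hx, rfl⟩
        show ‖(c • P) x‖ ≤ _
        rw [smul_apply, norm_smul]
        exact mul_le_mul_of_nonneg_left
          (le_csSup (bddAbove_image P) ⟨x, hx, rfl⟩) (norm_nonneg c)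
      · exact mul_nonneg (norm_nonneg c) (polyNorm_coe_nonneg P) }

end HPoly

/-! The bound `‖q (P x)‖ ≤ ‖q‖ ‖P‖ ^ k` on the unit ball gives `≤`. Conversely, for `‖x‖ ≤ 1` a
Hahn–Banach functional `f` of norm `≤ 1` with `f (P x) = ‖P x‖` yields `q = f ^ k` in the unit
ball of `𝒫(^k F)` with `|q (P x) ^ n| = ‖P x‖ ^ (k * n)`; taking the supremum over `x` gives `≥`. -/

section polyNorm

variable {E F : Type*} [Norm E] [Norm F]

theorem le_polyNorm {f : E → F} (hf : BddAbove ((fun x => ‖f x‖) '' {x : E | ‖x‖ ≤ 1}))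
    {x : E} (hx : ‖x‖ ≤ 1) : ‖f x‖ ≤ polyNorm f :=
  le_csSup hf ⟨x, hx, rfl⟩

theorem polyNorm_le {f : E → F} {C : ℝ} (hC : 0 ≤ C) (h : ∀ x : E, ‖x‖ ≤ 1 → ‖f x‖ ≤ C) :
    polyNorm f ≤ C :=
  Real.sSup_le (by rintro _ ⟨x, hx, rfl⟩; exact h x hx) hC

end polyNorm

namespace HPoly

variable {𝕜 : Type*} [RCLike 𝕜] {m : ℕ} {E F : Type*}
  [NormedAddCommGroup E] [NormedSpace 𝕜 E] [NormedAddCommGroup F] [NormedSpace 𝕜 F]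

theorem apply_le_norm (P : HPoly 𝕜 m E F) {x : E} (hx : ‖x‖ ≤ 1) : ‖P x‖ ≤ ‖P‖ :=
  le_polyNorm (bddAbove_image P) hx

theorem apply_smul (P : HPoly 𝕜 m E F) (c : 𝕜) (x : E) : P (c • x) = c ^ m • P x := by
  obtain ⟨A, hA⟩ := P.isPoly
  simpa [hA, Finset.prod_const] using A.map_smul_univ (fun _ => c) (fun _ => x)

theorem norm_apply_le (P : HPoly 𝕜 m E F) (x : E) : ‖P x‖ ≤ ‖P‖ * ‖x‖ ^ m := by
  rcases eq_or_ne x 0 with rfl | hx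
  · rcases Nat.eq_zero_or_pos m with rfl | hm
    · simpa using P.apply_le_norm (x := 0) (by simp)
    · have hP0 : P 0 = 0 := by simpa [zero_pow hm.ne'] using P.apply_smul 0 0
      simp [hP0, zero_pow hm.ne']
  · have hx' : (‖x‖ : 𝕜) ≠ 0 := by simpa using hx
    calc ‖P x‖ = ‖P ((‖x‖ : 𝕜) • (‖x‖⁻¹ : 𝕜) • x)‖ := by rw [smul_inv_smul₀ hx']
      _ = ‖x‖ ^ m * ‖P ((‖x‖⁻¹ : 𝕜) • x)‖ := by
          rw [apply_smul, norm_smul, norm_pow, RCLike.norm_ofReal, abs_norm]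
      _ ≤ ‖x‖ ^ m * ‖P‖ := by
          gcongr
          exact P.apply_le_norm (norm_smul_inv_norm hx).le
      _ = ‖P‖ * ‖x‖ ^ m := mul_comm _ _

theorem pow_norm_le_of_pow_norm_apply_le (P : HPoly 𝕜 m E F) {N : ℕ} {S : ℝ}
    (h : ∀ x : E, ‖x‖ ≤ 1 → ‖P x‖ ^ N ≤ S) : ‖P‖ ^ N ≤ S := by
  have hS : 0 ≤ S := (pow_nonneg (norm_nonneg _) N).trans (h 0 (by simp))
  rcases eq_or_ne N 0 with rfl | hN
  · simpa using h 0 (by simp)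
  have hN' : (0 : ℝ) < N := by positivity
  calc ‖P‖ ^ N ≤ (S ^ (N⁻¹ : ℝ)) ^ N := by
        refine pow_le_pow_left₀ (norm_nonneg P) (polyNorm_le (by positivity) fun x hx => ?_) N
        rw [Real.le_rpow_inv_iff_of_pos (norm_nonneg _) hS hN', Real.rpow_natCast]
        exact h x hx
    _ = S := Real.rpow_inv_natCast_pow hS hN

theorem norm_apply_comp_le {G : Type*} [NormedAddCommGroup G] [NormedSpace 𝕜 G] {k : ℕ}
    (q : HPoly 𝕜 k F G) (P : HPoly 𝕜 m E F) {x : E} (hx : ‖x‖ ≤ 1) :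
    ‖q (P x)‖ ≤ ‖q‖ * ‖P‖ ^ k :=
  calc ‖q (P x)‖ ≤ ‖q‖ * ‖P x‖ ^ k := q.norm_apply_le (P x)
    _ ≤ ‖q‖ * ‖P‖ ^ k := by gcongr; exact P.apply_le_norm hx

variable (k : ℕ)

noncomputable def dualPow (f : StrongDual 𝕜 F) : HPoly 𝕜 k F 𝕜 :=
  ⟨fun y => f y ^ k,
    (ContinuousMultilinearMap.mkPiAlgebra 𝕜 (Fin k) 𝕜).compContinuousLinearMap (fun _ => f),
      fun y => by simp [Finset.prod_const]⟩

@[simp] theorem dualPow_apply (f : StrongDual 𝕜 F) (y : F) : dualPow k f y = f y ^ k := rfl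

theorem norm_dualPow_le_one {f : StrongDual 𝕜 F} (hf : ‖f‖ ≤ 1) : ‖dualPow k f‖ ≤ 1 :=
  polyNorm_le zero_le_one fun y hy => by
    simpa using pow_le_one₀ (norm_nonneg _) (f.le_of_opNorm_le_of_le hf hy |>.trans_eq (one_mul 1))

end HPoly

theorem statement1_general (𝕜 : Type*) [RCLike 𝕜] (E F : Type*)
    [NormedAddCommGroup E] [NormedSpace 𝕜 E]
    [NormedAddCommGroup F] [NormedSpace 𝕜 F]
    (m n k : ℕ)
    (P : HPoly 𝕜 m E F) :
    sSup ((fun q : HPoly 𝕜 k F 𝕜 => polyNorm fun x : E => q (P x) ^ n) ''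
        {q : HPoly 𝕜 k F 𝕜 | ‖q‖ ≤ 1}) = ‖P‖ ^ (k * n) := by
  have h_comp_le : ∀ q : HPoly 𝕜 k F 𝕜, ‖q‖ ≤ 1 → ∀ x : E, ‖x‖ ≤ 1 →
      ‖q (P x) ^ n‖ ≤ ‖P‖ ^ (k * n) := fun q hq x hx => by
    rw [norm_pow, pow_mul]
    gcongr
    exact (q.norm_apply_comp_le P hx).trans (mul_le_of_le_one_left (by positivity) hq)
  have h_polyNorm_le : ∀ q : HPoly 𝕜 k F 𝕜, ‖q‖ ≤ 1 →
      (polyNorm fun x : E => q (P x) ^ n) ≤ ‖P‖ ^ (k * n) := fun q hq =>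
    polyNorm_le (by positivity) (h_comp_le q hq)
  have h_bdd : BddAbove ((fun q : HPoly 𝕜 k F 𝕜 => polyNorm fun x : E => q (P x) ^ n) ''
      {q : HPoly 𝕜 k F 𝕜 | ‖q‖ ≤ 1}) :=
    ⟨_, by rintro _ ⟨q, hq, rfl⟩; exact h_polyNorm_le q hq⟩
  refine le_antisymm (Real.sSup_le ?_ (by positivity))
    (P.pow_norm_le_of_pow_norm_apply_le fun x hx => ?_)
  · rintro _ ⟨q, hq, rfl⟩
    exact h_polyNorm_le q hq
  obtain ⟨f, hf, hfx⟩ := exists_dual_vector'' 𝕜 (P x)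
  have hq := HPoly.norm_dualPow_le_one k hf
  calc ‖P x‖ ^ (k * n) = ‖HPoly.dualPow k f (P x) ^ n‖ := by
        rw [HPoly.dualPow_apply, hfx, ← pow_mul, norm_pow, RCLike.norm_ofReal, abs_norm]
    _ ≤ polyNorm fun y : E => HPoly.dualPow k f (P y) ^ n :=
        le_polyNorm ⟨_, by rintro _ ⟨y, hy, rfl⟩; exact h_comp_le _ hq y hy⟩ hx
    _ ≤ _ := le_csSup h_bdd ⟨_, hq, rfl⟩

/-- `‖Δₖⁿ P‖ = sup_{‖q‖ ≤ 1} ‖(Δₖⁿ P) q‖ = ‖P‖ ^ (k * n)`. -/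
theorem statement1 (𝕜 : Type*) [RCLike 𝕜] (E F : Type*)
    [NormedAddCommGroup E] [NormedSpace 𝕜 E] [CompleteSpace E]
    [NormedAddCommGroup F] [NormedSpace 𝕜 F] [CompleteSpace F]
    (m n k : ℕ) (hm : 1 ≤ m) (hn : 1 ≤ n) (hk : 1 ≤ k)
    (P : HPoly 𝕜 m E F) :
    sSup ((fun q : HPoly 𝕜 k F 𝕜 => polyNorm fun x : E => q (P x) ^ n) ''
        {q : HPoly 𝕜 k F 𝕜 | ‖q‖ ≤ 1}) = ‖P‖ ^ (k * n) :=
  statement1_general 𝕜 E F m n k P
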